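/- arXiv:2405.19268 — 3 statements merged into one kernel-verified Lean document; each statement's English description precedes it below -/
import Mathlib

section
/- Every digraph D on Fin n that has sign symmetric P_0^+-completion also has sign symmetric P-completion. -/
namespace SSP

/-- The principal minor of `B` on the index set `S`: the determinant of the
S×S principal submatrix of `B`. -/
def pMinor {n : ℕ} (B : Matrix (Fin n) (Fin n) ℝ) (S : Finset (Fin n)) : ℝ :=
  (B.submatrix (fun i : {x // x ∈ S} => (i : Fin n))
               (fun j : {x // x ∈ S} => (j : Fin n))).det

/-- `B` is sign symmetric: for all `i ≠ j`, twin entries have a positive product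
or are both zero. -/
def SignSym {n : ℕ} (B : Matrix (Fin n) (Fin n) ℝ) : Prop :=
  ∀ i j : Fin n, i ≠ j → (0 < B i j * B j i ∨ (B i j = 0 ∧ B j i = 0))

/-- `B` is a P₀-matrix: every principal minor is nonnegative. -/
def IsP0 {n : ℕ} (B : Matrix (Fin n) (Fin n) ℝ) : Prop :=
  ∀ S : Finset (Fin n), S.Nonempty → 0 ≤ pMinor B S

/-- `B` is a P-matrix: every principal minor is positive. -/
def IsP {n : ℕ} (B : Matrix (Fin n) (Fin n) ℝ) : Prop :=
  ∀ S : Finset (Fin n), S.Nonempty → 0 < pMinor B S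

/-- `B` is a P₀⁺-matrix: for every `k ∈ {1,…,n}`, every size-`k` principal
minor is nonnegative and at least one size-`k` principal minor is positive. -/
def IsP0plus {n : ℕ} (B : Matrix (Fin n) (Fin n) ℝ) : Prop :=
  ∀ k : ℕ, 1 ≤ k → k ≤ n →
    ((∀ S : Finset (Fin n), S.card = k → 0 ≤ pMinor B S) ∧
     (∃ S : Finset (Fin n), S.card = k ∧ 0 < pMinor B S))

/-- `B` is a P₀₁⁺-matrix: a P₀⁺-matrix with positive diagonal entries. -/
def IsP01plus {n : ℕ} (B : Matrix (Fin n) (Fin n) ℝ) : Prop :=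
  IsP0plus B ∧ ∀ i : Fin n, 0 < B i i

/-- `B` is a P₀₁-matrix: a P₀-matrix with positive diagonal entries. -/
def IsP01 {n : ℕ} (B : Matrix (Fin n) (Fin n) ℝ) : Prop :=
  IsP0 B ∧ ∀ i : Fin n, 0 < B i i

/-- Every specified diagonal entry of the partial matrix `A` (specifying the
digraph `D`) is positive. -/
def PartialDiagPos {n : ℕ} (D : Fin n → Fin n → Prop)
    (A : Matrix (Fin n) (Fin n) ℝ) : Prop :=
  ∀ i : Fin n, D i i → 0 < A i i

/-- Fully specified twin entries of the partial matrix `A` have positive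
product or are both zero. -/
def PartialTwin {n : ℕ} (D : Fin n → Fin n → Prop)
    (A : Matrix (Fin n) (Fin n) ℝ) : Prop :=
  ∀ i j : Fin n, i ≠ j → D i j → D j i →
    (0 < A i j * A j i ∨ (A i j = 0 ∧ A j i = 0))

/-- Every fully specified principal minor of the partial matrix `A` is
nonnegative. -/
def PartialMinorsNonneg {n : ℕ} (D : Fin n → Fin n → Prop)
    (A : Matrix (Fin n) (Fin n) ℝ) : Prop :=
  ∀ S : Finset (Fin n), S.Nonempty → (∀ i ∈ S, ∀ j ∈ S, D i j) → 0 ≤ pMinor A S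

/-- Every fully specified principal minor of the partial matrix `A` is
positive. -/
def PartialMinorsPos {n : ℕ} (D : Fin n → Fin n → Prop)
    (A : Matrix (Fin n) (Fin n) ℝ) : Prop :=
  ∀ S : Finset (Fin n), S.Nonempty → (∀ i ∈ S, ∀ j ∈ S, D i j) → 0 < pMinor A S

/-- `B` is a completion of the partial matrix `A` specifying `D`. -/
def Completes {n : ℕ} (D : Fin n → Fin n → Prop)
    (A B : Matrix (Fin n) (Fin n) ℝ) : Prop :=
  ∀ i j : Fin n, D i j → B i j = A i j

/-- `A` is a partial sign symmetric P₀₁⁺-matrix specifying `D`. -/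
def PartSSP01plus {n : ℕ} (D : Fin n → Fin n → Prop)
    (A : Matrix (Fin n) (Fin n) ℝ) : Prop :=
  PartialDiagPos D A ∧ PartialTwin D A ∧ PartialMinorsNonneg D A

/-- `A` is a partial sign symmetric P₀₁-matrix specifying `D`. -/
def PartSSP01 {n : ℕ} (D : Fin n → Fin n → Prop)
    (A : Matrix (Fin n) (Fin n) ℝ) : Prop :=
  PartialDiagPos D A ∧ PartialTwin D A ∧ PartialMinorsNonneg D A

/-- `A` is a partial sign symmetric P₀-matrix specifying `D`. -/
def PartSSP0 {n : ℕ} (D : Fin n → Fin n → Prop)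
    (A : Matrix (Fin n) (Fin n) ℝ) : Prop :=
  PartialTwin D A ∧ PartialMinorsNonneg D A

/-- `A` is a partial sign symmetric P₀⁺-matrix specifying `D`. -/
def PartSSP0plus {n : ℕ} (D : Fin n → Fin n → Prop)
    (A : Matrix (Fin n) (Fin n) ℝ) : Prop :=
  PartialTwin D A ∧ PartialMinorsNonneg D A

/-- `A` is a partial sign symmetric P-matrix specifying `D`. -/
def PartSSP {n : ℕ} (D : Fin n → Fin n → Prop)
    (A : Matrix (Fin n) (Fin n) ℝ) : Prop :=
  PartialTwin D A ∧ PartialMinorsPos D A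

/-- `D` has sign symmetric P₀₁⁺-completion. -/
def HasSSP01plusCompletion {n : ℕ} (D : Fin n → Fin n → Prop) : Prop :=
  ∀ A : Matrix (Fin n) (Fin n) ℝ, PartSSP01plus D A →
    ∃ B : Matrix (Fin n) (Fin n) ℝ, Completes D A B ∧ SignSym B ∧ IsP01plus B

/-- `D` has sign symmetric P₀₁-completion. -/
def HasSSP01Completion {n : ℕ} (D : Fin n → Fin n → Prop) : Prop :=
  ∀ A : Matrix (Fin n) (Fin n) ℝ, PartSSP01 D A →
    ∃ B : Matrix (Fin n) (Fin n) ℝ, Completes D A B ∧ SignSym B ∧ IsP01 B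

/-- `D` has sign symmetric P₀-completion. -/
def HasSSP0Completion {n : ℕ} (D : Fin n → Fin n → Prop) : Prop :=
  ∀ A : Matrix (Fin n) (Fin n) ℝ, PartSSP0 D A →
    ∃ B : Matrix (Fin n) (Fin n) ℝ, Completes D A B ∧ SignSym B ∧ IsP0 B

/-- `D` has sign symmetric P₀⁺-completion. -/
def HasSSP0plusCompletion {n : ℕ} (D : Fin n → Fin n → Prop) : Prop :=
  ∀ A : Matrix (Fin n) (Fin n) ℝ, PartSSP0plus D A →
    ∃ B : Matrix (Fin n) (Fin n) ℝ, Completes D A B ∧ SignSym B ∧ IsP0plus B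

/-- `D` has sign symmetric P-completion. -/
def HasSSPCompletion {n : ℕ} (D : Fin n → Fin n → Prop) : Prop :=
  ∀ A : Matrix (Fin n) (Fin n) ℝ, PartSSP D A →
    ∃ B : Matrix (Fin n) (Fin n) ℝ, Completes D A B ∧ SignSym B ∧ IsP B

end SSP

/-!
Shift the diagonal. If `A` is a partial sign symmetric P-matrix, its finitely many fully
specified principal minors stay positive for `A - ε • 1` with `ε > 0` small, so `A - ε • 1` is a
partial sign symmetric P₀⁺-matrix and has a sign symmetric P₀⁺-completion `B`. Then `B + ε • 1`
completes `A`, is still sign symmetric, and is a P-matrix: each of its principal minors is a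
polynomial in `ε` whose coefficients are sums of principal minors of the P₀-matrix `B`, hence
nonnegative, and whose leading coefficient is `1`.
-/

open Matrix Polynomial Filter Topology

section PrincipalMinors

variable {ι : Type*} [Fintype ι] [DecidableEq ι]

/-- The coefficient of `t ^ k` in `det (1 + t • M)` is the sum of the `k × k` principal minors
of `M`; for `k = 0` it is `1`. -/
theorem Matrix.det_one_add_smul_pos {M : Matrix ι ι ℝ}
    (hM : ∀ s : Finset ι, s.Nonempty → 0 ≤ (M.submatrix ((↑) : s → ι) (↑)).det)
    {t : ℝ} (ht : 0 ≤ t) : 0 < (1 + t • M).det := by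
  have hp : (1 + t • M).det = (det (1 + (X : ℝ[X]) • M.map C)).eval t := by
    rw [eval_det]; congr 1; ext i j; simp [Matrix.one_apply, mul_comm]
  rw [hp, eval_eq_sum_range]
  refine Finset.sum_pos' (fun k _ => mul_nonneg ?_ (pow_nonneg ht k)) ⟨0, by simp, ?_⟩
  · rw [coeff_det_one_add_X_smul_eq_sum_minors]
    refine Finset.sum_nonneg fun s _ => ?_
    obtain rfl | hs := s.eq_empty_or_nonempty
    · simp
    · exact hM s hs
  · simp [coeff_det_one_add_X_smul_eq_sum_minors]

theorem Matrix.det_add_smul_one_pos {M : Matrix ι ι ℝ}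
    (hM : ∀ s : Finset ι, s.Nonempty → 0 ≤ (M.submatrix ((↑) : s → ι) (↑)).det)
    {ε : ℝ} (hε : 0 < ε) : 0 < (M + ε • 1).det := by
  have : M + ε • 1 = ε • (1 + ε⁻¹ • M) := by
    rw [smul_add, smul_smul, mul_inv_cancel₀ hε.ne', one_smul, add_comm]
  rw [this, det_smul]
  exact mul_pos (pow_pos hε _) (det_one_add_smul_pos hM (inv_nonneg.mpr hε.le))

end PrincipalMinors

namespace SSP

variable {n : ℕ} {D : Fin n → Fin n → Prop} {A B : Matrix (Fin n) (Fin n) ℝ}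

theorem pMinor_map_subtype (S : Finset (Fin n)) (t : Finset S) :
    pMinor B (t.map (Function.Embedding.subtype _)) =
      ((B.submatrix (Subtype.val : S → Fin n) Subtype.val).submatrix
        (Subtype.val : t → S) Subtype.val).det := by
  let e : t ≃ t.map (Function.Embedding.subtype _) :=
    (Equiv.Set.image Subtype.val (t : Set S) Subtype.val_injective).trans
      (Equiv.subtypeEquivRight fun _ => by simp)
  rw [pMinor, ← det_submatrix_equiv_self e]
  rfl

theorem IsP0plus.isP0 (hB : IsP0plus B) : IsP0 B := fun S hS =>
  (hB S.card (Finset.card_pos.mpr hS) (card_finset_fin_le S)).1 S rfl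

theorem IsP0.isP_add_smul_one (hB : IsP0 B) {ε : ℝ} (hε : 0 < ε) : IsP (B + ε • 1) := by
  intro S _
  have hsub : (B + ε • 1).submatrix (Subtype.val : S → Fin n) (Subtype.val : S → Fin n) =
      B.submatrix Subtype.val Subtype.val + ε • 1 := by
    rw [← submatrix_one (Subtype.val : S → Fin n) Subtype.val_injective]
    rfl
  rw [pMinor, hsub]
  refine det_add_smul_one_pos (fun t ht => ?_) hε
  rw [← pMinor_map_subtype]
  exact hB _ (ht.map)

theorem PartialMinorsPos.eventually_sub_smul_one (hA : PartialMinorsPos D A) :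
    ∀ᶠ ε in 𝓝 (0 : ℝ), PartialMinorsPos D (A - ε • 1) := by
  refine eventually_all.mpr fun S => eventually_imp_distrib_left.mpr fun hS =>
    eventually_imp_distrib_left.mpr fun hD => ?_
  have hcont : Continuous fun ε : ℝ => pMinor (A - ε • 1) S :=
    ((continuous_const.sub (continuous_id.smul continuous_const)).matrix_submatrix _ _).matrix_det
  have hpos : 0 < pMinor (A - (0 : ℝ) • 1) S := by simpa using hA S hS hD
  exact continuousAt_const.eventually_lt hcont.continuousAt hpos

theorem PartialMinorsPos.exists_pos_sub_smul_one (hA : PartialMinorsPos D A) :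
    ∃ ε : ℝ, 0 < ε ∧ PartialMinorsPos D (A - ε • 1) :=
  ((eventually_mem_nhdsWithin (s := Set.Ioi 0)).and
    (hA.eventually_sub_smul_one.filter_mono nhdsWithin_le_nhds)).exists

theorem PartialTwin.sub_smul_one (hA : PartialTwin D A) (ε : ℝ) :
    PartialTwin D (A - ε • 1) := fun i j hij hDij hDji => by
  simpa [one_apply_ne hij, one_apply_ne hij.symm] using hA i j hij hDij hDji

theorem SignSym.add_smul_one (hB : SignSym B) (ε : ℝ) : SignSym (B + ε • 1) := fun i j hij => by
  simpa [one_apply_ne hij, one_apply_ne hij.symm] using hB i j hij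

theorem Completes.add_smul_one {ε : ℝ} (hB : Completes D (A - ε • 1) B) :
    Completes D A (B + ε • 1) := fun i j hD => by
  simp [hB i j hD]

/-- Any digraph that has sign symmetric P₀⁺-completion also has sign symmetric
P-completion. -/
theorem hasSSP0plusCompletion_imp_hasSSPCompletion {n : ℕ}
    (D : Fin n → Fin n → Prop) (h : HasSSP0plusCompletion D) :
    HasSSPCompletion D := by
  rintro A ⟨hA_twin, hA_minors⟩
  obtain ⟨ε, hε, hA'_minors⟩ := hA_minors.exists_pos_sub_smul_one
  obtain ⟨B, hB_completes, hB_sign, hB⟩ :=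
    h (A - ε • 1) ⟨hA_twin.sub_smul_one ε, fun S hS hD => (hA'_minors S hS hD).le⟩
  exact ⟨B + ε • 1, hB_completes.add_smul_one, hB_sign.add_smul_one ε,
    hB.isP0.isP_add_smul_one hε⟩

end SSP
end

section
/- The digraph D_1 on Fin 3 whose arcs are all six pairs (i,j) with i ≠ j together with the loops at vertices 1 and 2 (but with no loop at vertex 3) does not have sign symmetric P_{0,1}^+-completion. -/
namespace SSP

/-- The digraph `D₁` on three vertices consisting of all six arcs between
distinct vertices together with loops at vertices 1 and 2 (no loop at
vertex 3). -/
def D1 : Fin 3 → Fin 3 → Prop := fun i j => i ≠ j ∨ (i = j ∧ i ≠ 2)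

/-! The specified entries of `D₁` form the matrix `[[1,1,1],[1,1,2],[1,2,?]]`, whose fully specified
principal minors are `1`, `1` and `det [[1,1],[1,1]] = 0`. The cofactor of the free entry is that
vanishing `2 × 2` minor, so every completion has determinant `-1`, whereas the determinant of a
P₀⁺-matrix is its unique principal minor of full size and hence nonnegative. -/

lemma pMinor_singleton {n : ℕ} (B : Matrix (Fin n) (Fin n) ℝ) (i : Fin n) :
    pMinor B {i} = B i i := by
  let : Unique {x // x ∈ ({i} : Finset (Fin n))} :=
    ⟨⟨⟨i, Finset.mem_singleton_self i⟩⟩, fun x => Subtype.ext (Finset.mem_singleton.mp x.2)⟩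
  rw [pMinor, Matrix.det_unique]
  rfl

def finTwoEquivPair {n : ℕ} {i j : Fin n} (h : i ≠ j) :
    Fin 2 ≃ {x // x ∈ ({i, j} : Finset (Fin n))} where
  toFun k := if k = 0 then ⟨i, by simp⟩ else ⟨j, by simp⟩
  invFun x := if x.1 = i then 0 else 1
  left_inv k := by fin_cases k <;> simp [h.symm]
  right_inv := by
    rintro ⟨x, hx⟩
    rcases Finset.mem_insert.mp hx with rfl | hx
    · simp
    · obtain rfl := Finset.mem_singleton.mp hx
      simp [h.symm]

lemma pMinor_pair {n : ℕ} (B : Matrix (Fin n) (Fin n) ℝ) {i j : Fin n} (h : i ≠ j) :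
    pMinor B {i, j} = B i i * B j j - B i j * B j i := by
  rw [pMinor, ← Matrix.det_submatrix_equiv_self (finTwoEquivPair h), Matrix.submatrix_submatrix,
    Matrix.det_fin_two]
  simp [finTwoEquivPair]

lemma pMinor_univ {n : ℕ} (B : Matrix (Fin n) (Fin n) ℝ) : pMinor B Finset.univ = B.det :=
  Matrix.det_submatrix_equiv_self (Equiv.subtypeUnivEquiv Finset.mem_univ) B

lemma pMinor_nonneg_of_subset_pair {n : ℕ} {B : Matrix (Fin n) (Fin n) ℝ} {i j : Fin n}
    (hi : 0 ≤ B i i) (hj : 0 ≤ B j j) (hpair : 0 ≤ pMinor B {i, j})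
    {S : Finset (Fin n)} (hS : S.Nonempty) (hSij : S ⊆ {i, j}) : 0 ≤ pMinor B S := by
  by_cases hiS : i ∈ S <;> by_cases hjS : j ∈ S
  · rwa [Finset.Subset.antisymm hSij (Finset.insert_subset hiS (by simpa using hjS))]
  · obtain rfl : S = {i} := by grind
    rwa [pMinor_singleton]
  · obtain rfl : S = {j} := by grind
    rwa [pMinor_singleton]
  · obtain ⟨x, hx⟩ := hS
    grind

lemma IsP0plus.det_nonneg {n : ℕ} {B : Matrix (Fin n) (Fin n) ℝ} (hB : IsP0plus B) (hn : 1 ≤ n) :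
    0 ≤ B.det :=
  pMinor_univ B ▸ (hB n hn le_rfl).1 Finset.univ (by simp)

lemma subset_of_specified_D1 {S : Finset (Fin 3)} (hS : ∀ i ∈ S, ∀ j ∈ S, D1 i j) :
    S ⊆ {0, 1} := by
  intro x hx
  have := hS x hx x hx
  fin_cases x <;> simp_all [D1]

/-- The `(2, 2)` entry is not specified by `D1`; its value `0` is a placeholder. -/
def d1Counterexample : Matrix (Fin 3) (Fin 3) ℝ := !![1, 1, 1; 1, 1, 2; 1, 2, 0]

lemma partSSP01plus_d1Counterexample : PartSSP01plus D1 d1Counterexample := by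
  refine ⟨?diag, ?twin, ?minors⟩
  case diag =>
    intro i hi
    fin_cases i <;> simp_all [D1, d1Counterexample]
  case twin =>
    intro i j hij _ _
    left
    fin_cases i <;> fin_cases j <;> simp_all [d1Counterexample]
  case minors =>
    intro S hS hspec
    refine pMinor_nonneg_of_subset_pair ?_ ?_ ?_ hS (subset_of_specified_D1 hspec)
    all_goals simp [d1Counterexample, pMinor_pair]

lemma det_eq_neg_one_of_completes_d1Counterexample {B : Matrix (Fin 3) (Fin 3) ℝ}
    (hB : Completes D1 d1Counterexample B) : B.det = -1 := by
  have entry (i j : Fin 3) (hij : i ≠ j ∨ i ≠ 2) : B i j = d1Counterexample i j :=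
    hB i j (by unfold D1; tauto)
  rw [Matrix.det_fin_three, entry 0 0 (by decide), entry 0 1 (by decide), entry 0 2 (by decide),
    entry 1 0 (by decide), entry 1 1 (by decide), entry 1 2 (by decide), entry 2 0 (by decide),
    entry 2 1 (by decide)]
  simp [d1Counterexample]
  norm_num

/-- The digraph `D₁` does not have sign symmetric P₀₁⁺-completion. -/
theorem D1_not_hasSSP01plusCompletion : ¬ HasSSP01plusCompletion D1 := by
  intro h
  obtain ⟨B, hBA, -, hB, -⟩ := h _ partSSP01plus_d1Counterexample
  linarith [hB.det_nonneg (by norm_num), det_eq_neg_one_of_completes_d1Counterexample hBA]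

end SSP
end

section
/- Let n ≥ 1, let E be a set of ordered pairs (i,j) of elements of Fin n with i ≠ j, and let a : E → ℝ be such that whenever (i,j) ∈ E and (j,i) ∈ E, either a(i,j)*a(j,i) > 0 or a(i,j) = a(j,i) = 0. Then there exists a matrix B : Matrix (Fin n) (Fin n) ℝ such that B i j = a(i,j) for every (i,j) ∈ E, B is sign symmetric, and every principal minor of B is positive (hence B is a sign symmetric P_{0,1}^+-matrix). -/
open Filter Matrix

theorem Matrix.eventually_det_smul_one_add_pos {ι : Type*} [Fintype ι] [DecidableEq ι]
    [Nonempty ι] (M : Matrix ι ι ℝ) :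
    ∀ᶠ t : ℝ in atTop, 0 < (t • (1 : Matrix ι ι ℝ) + M).det := by
  have hdeg : 0 < (-M).charpoly.degree := by
    rw [charpoly_degree_eq_dim]; exact_mod_cast Fintype.card_pos
  have hlc : 0 ≤ (-M).charpoly.leadingCoeff := by
    rw [(charpoly_monic _).leadingCoeff]; exact zero_le_one
  filter_upwards [(Polynomial.tendsto_atTop_of_leadingCoeff_nonneg _ hdeg hlc).eventually_gt_atTop 0]
    with t ht
  rwa [eval_charpoly, scalar_apply, ← smul_one_eq_diagonal, sub_neg_eq_add] at ht

namespace SSP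

theorem pMinor_smul_one_add {n : ℕ} (t : ℝ) (M : Matrix (Fin n) (Fin n) ℝ) (S : Finset (Fin n)) :
    pMinor (t • 1 + M) S = (t • 1 + M.submatrix ((↑) : S → Fin n) (↑)).det := by
  rw [pMinor, ← submatrix_one _ Subtype.val_injective]
  rfl

theorem exists_forall_pMinor_smul_one_add_pos {n : ℕ} (M : Matrix (Fin n) (Fin n) ℝ) :
    ∃ t : ℝ, ∀ S : Finset (Fin n), S.Nonempty → 0 < pMinor (t • 1 + M) S := by
  have h : ∀ᶠ t : ℝ in atTop, ∀ S : Finset (Fin n), S.Nonempty → 0 < pMinor (t • 1 + M) S := by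
    refine eventually_all.2 fun S => ?_
    by_cases hS : S.Nonempty
    · have : Nonempty S := hS.to_subtype
      simpa only [hS, pMinor_smul_one_add, forall_const] using
        eventually_det_smul_one_add_pos (M.submatrix ((↑) : S → Fin n) (↑))
    · exact .of_forall fun _ h => absurd h hS
  exact h.exists

open Classical in
noncomputable def twinFill {n : ℕ} (E : Set (Fin n × Fin n)) (a : Fin n → Fin n → ℝ) :
    Matrix (Fin n) (Fin n) ℝ :=
  Matrix.of fun i j => if (i, j) ∈ E then a i j else if (j, i) ∈ E then a j i else 0

theorem twinFill_of_mem {n : ℕ} {E : Set (Fin n × Fin n)} {a : Fin n → Fin n → ℝ} {i j : Fin n}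
    (h : (i, j) ∈ E) : twinFill E a i j = a i j := by
  simp [twinFill, h]

theorem signSym_twinFill {n : ℕ} {E : Set (Fin n × Fin n)} {a : Fin n → Fin n → ℝ}
    (ha : ∀ i j : Fin n, (i, j) ∈ E → (j, i) ∈ E →
      (0 < a i j * a j i ∨ (a i j = 0 ∧ a j i = 0))) :
    SignSym (twinFill E a) := by
  have twin_self : ∀ x : ℝ, 0 < x * x ∨ (x = 0 ∧ x = 0) := fun x =>
    (eq_or_ne x 0).elim (fun h => Or.inr ⟨h, h⟩) (fun h => Or.inl (mul_self_pos.2 h))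
  intro i j _
  by_cases hij : (i, j) ∈ E <;> by_cases hji : (j, i) ∈ E <;>
    simp only [twinFill, of_apply, hij, hji, if_true, if_false]
  · exact ha i j hij hji
  · exact twin_self _
  · exact twin_self _
  · norm_num

theorem SignSym.smul_one_add {n : ℕ} {M : Matrix (Fin n) (Fin n) ℝ} (hM : SignSym M) (t : ℝ) :
    SignSym (t • 1 + M) := by
  intro i j hij
  simpa [one_apply_ne hij, one_apply_ne hij.symm] using hM i j hij

theorem offdiag_extends_to_sign_symmetric_P_general {n : ℕ}
    (E : Set (Fin n × Fin n)) (hE : ∀ p ∈ E, p.1 ≠ p.2)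
    (a : Fin n → Fin n → ℝ)
    (ha : ∀ i j : Fin n, (i, j) ∈ E → (j, i) ∈ E →
      (0 < a i j * a j i ∨ (a i j = 0 ∧ a j i = 0))) :
    ∃ B : Matrix (Fin n) (Fin n) ℝ,
      (∀ i j : Fin n, (i, j) ∈ E → B i j = a i j) ∧ SignSym B ∧
      (∀ S : Finset (Fin n), S.Nonempty → 0 < pMinor B S) := by
  obtain ⟨t, ht⟩ := exists_forall_pMinor_smul_one_add_pos (twinFill E a)
  refine ⟨t • 1 + twinFill E a, fun i j hij => ?_, (signSym_twinFill ha).smul_one_add t, ht⟩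
  simp [one_apply_ne (hE _ hij), twinFill_of_mem hij]

/-- Matrix form of the completion theorem for loopless digraphs: any
assignment of off-diagonal entries satisfying the twin condition extends to a
sign symmetric matrix all of whose principal minors are positive. -/
theorem offdiag_extends_to_sign_symmetric_P {n : ℕ} (hn : 1 ≤ n)
    (E : Set (Fin n × Fin n)) (hE : ∀ p ∈ E, p.1 ≠ p.2)
    (a : Fin n → Fin n → ℝ)
    (ha : ∀ i j : Fin n, (i, j) ∈ E → (j, i) ∈ E →
      (0 < a i j * a j i ∨ (a i j = 0 ∧ a j i = 0))) :
    ∃ B : Matrix (Fin n) (Fin n) ℝ,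
      (∀ i j : Fin n, (i, j) ∈ E → B i j = a i j) ∧ SignSym B ∧
      (∀ S : Finset (Fin n), S.Nonempty → 0 < pMinor B S) :=
  offdiag_extends_to_sign_symmetric_P_general E hE a ha

end SSP
end
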